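/- arXiv:1705.05509 — 2 statements merged into one kernel-verified Lean document; each statement's English description precedes it below -/
import Mathlib

section
/- Let u be the quaternary sequence of length N = 2n generated by Construction I from binary sequences a_0, a_1, a_2, a_3 of odd length n and bits e(0), e(1), e(2). Then for every even shift τ = 2τ_0 with 0 ≤ τ_0 < n, R_u(τ) = [R_{a_0}(τ_0) + R_{a_1}(τ_0) + R_{a_2}(τ_0) + R_{a_3}(τ_0)]/2 + (−1)^{e(1)}[R_{a_0,a_2}(τ_0) − R_{a_2,a_0}(τ_0) + (−1)^{e(0)+e(1)+e(2)}(R_{a_1,a_3}(τ_0) − R_{a_3,a_1}(τ_0))]·ξ/2, where ξ = √−1. -/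
/-!
The Gray map satisfies `i ^ φ⁻¹(p, q) = ((1 + i) (-1)^p + (1 - i) (-1)^q) / 2`, so the quaternary
correlation of `φ⁻¹(c, d)` with `φ⁻¹(c', d')` splits into the four binary correlations of the
components. At an even shift `2τ₀` the correlation of two interleaved sequences is the sum of the
correlations of their even and of their odd parts at `τ₀`. The constant bits `e(i)` only contribute
signs, and the common cyclic shift by `λ` of `a₁` and `a₃` does not change their correlations.
-/

/-- Cross-correlation of two sequences of length `N` over `ℤ_H`, with `ξ = exp(2πi/H)`. -/
noncomputable def crossCorr (H N : ℕ) (s t : ZMod N → ZMod H) (τ : ZMod N) : ℂ :=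
  ∑ i ∈ Finset.range N,
    Complex.exp (2 * (Real.pi : ℂ) * Complex.I / (H : ℂ)) ^ ((s (i : ZMod N) - t ((i : ZMod N) + τ)).val)

/-- Cross-correlation of two binary sequences of length `N` (an integer). -/
def binCorr (N : ℕ) (s t : ZMod N → ZMod 2) (τ : ZMod N) : ℤ :=
  ∑ i ∈ Finset.range N, (-1 : ℤ) ^ ((s (i : ZMod N) + t ((i : ZMod N) + τ)).val)

/-- Cross-correlation of two quaternary sequences of length `N`, with `ξ = √-1`. -/
noncomputable def quadCorr (N : ℕ) (s t : ZMod N → ZMod 4) (τ : ZMod N) : ℂ :=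
  ∑ i ∈ Finset.range N, Complex.I ^ ((s (i : ZMod N) - t ((i : ZMod N) + τ)).val)

/-- Interleaving `u = I(a, b)`: `u(2i) = a(i)`, `u(2i+1) = b(i)`. -/
def interleaveSeq {H : ℕ} (n : ℕ) (a b : ZMod n → ZMod H) : ZMod (2 * n) → ZMod H :=
  fun k => if k.val % 2 = 0 then a ((k.val / 2 : ℕ) : ZMod n) else b ((k.val / 2 : ℕ) : ZMod n)

/-- The inverse Gray mapping `φ⁻¹ : ℤ₂ × ℤ₂ → ℤ₄`. -/
def grayInv (a b : ZMod 2) : ZMod 4 :=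
  if a = 0 then (if b = 0 then 0 else 1) else (if b = 0 then 3 else 2)

/-- Construction I: the quaternary sequence of length `2n` built from
`a₀, a₁, a₂, a₃` and bits `e₀, e₁, e₂`. -/
def constructionI (n : ℕ) (a0 a1 a2 a3 : ZMod n → ZMod 2)
    (e0 e1 e2 : ZMod 2) : ZMod (2 * n) → ZMod 4 :=
  let lam : ZMod n := (((n + 1) / 2 : ℕ) : ZMod n)
  let c := interleaveSeq n a0 (fun i => e0 + a1 (i + lam))
  let d := interleaveSeq n (fun i => e1 + a2 i) (fun i => e2 + a3 (i + lam))
  fun i => grayInv (c i) (d i)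

open Finset

lemma neg_one_pow_val_add {R : Type*} [Ring R] (p q : ZMod 2) :
    (-1 : R) ^ (p + q).val = (-1) ^ p.val * (-1) ^ q.val := by
  rw [ZMod.val_add, ← neg_one_pow_eq_pow_mod_two, pow_add]

lemma I_pow_val_grayInv_sub (p q p' q' : ZMod 2) :
    Complex.I ^ (grayInv p q - grayInv p' q').val =
      ((-1) ^ (p + p').val + (-1) ^ (q + q').val) / 2 +
        ((-1) ^ (p + q').val - (-1) ^ (q + p').val) * Complex.I / 2 := by
  have h01 : ∀ x : ZMod 2, x = 0 ∨ x = 1 := by decide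
  have hval : (1 : ZMod 2).val = 1 ∧ (1 : ZMod 4).val = 1 ∧ (2 : ZMod 4).val = 2 ∧
      (3 : ZMod 4).val = 3 ∧ (-1 : ZMod 4).val = 3 ∧ (-2 : ZMod 4).val = 2 ∧
      (-3 : ZMod 4).val = 1 := by decide
  obtain ⟨h1, h2, h3, h4, h5, h6, h7⟩ := hval
  simp only [neg_one_pow_val_add]
  rcases h01 p with rfl | rfl <;> rcases h01 q with rfl | rfl <;>
    rcases h01 p' with rfl | rfl <;> rcases h01 q' with rfl | rfl <;>
    norm_num [grayInv, h1, h2, h3, h4, h5, h6, h7, pow_succ] <;> ring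

lemma quadCorr_grayInv (N : ℕ) (c d c' d' : ZMod N → ZMod 2) (τ : ZMod N) :
    quadCorr N (fun i => grayInv (c i) (d i)) (fun i => grayInv (c' i) (d' i)) τ =
      ((binCorr N c c' τ + binCorr N d d' τ : ℤ) : ℂ) / 2 +
        ((binCorr N c d' τ - binCorr N d c' τ : ℤ) : ℂ) * Complex.I / 2 := by
  simp only [quadCorr, binCorr, I_pow_val_grayInv_sub]
  push_cast
  rw [sum_add_distrib, ← sum_div, ← sum_div, ← sum_mul, sum_add_distrib, sum_sub_distrib]

lemma binCorr_const_add_left (N : ℕ) (e : ZMod 2) (s t : ZMod N → ZMod 2) (τ : ZMod N) :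
    binCorr N (fun i => e + s i) t τ = (-1) ^ e.val * binCorr N s t τ := by
  simp only [binCorr, add_assoc, neg_one_pow_val_add, mul_sum]

lemma binCorr_const_add_right (N : ℕ) (e : ZMod 2) (s t : ZMod N → ZMod 2) (τ : ZMod N) :
    binCorr N s (fun i => e + t i) τ = (-1) ^ e.val * binCorr N s t τ := by
  simp only [binCorr, add_left_comm _ e, neg_one_pow_val_add, mul_sum]

lemma sum_range_natCast_zmod {M : Type*} [AddCommMonoid M] (n : ℕ) [NeZero n] (g : ZMod n → M) :
    ∑ k ∈ range n, g k = ∑ x, g x := by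
  refine sum_nbij' (fun k => (k : ZMod n)) ZMod.val ?_ ?_ ?_ ?_ ?_ <;>
    simp +contextual [ZMod.val_lt, Nat.mod_eq_of_lt]

lemma binCorr_comp_add_right (N : ℕ) (c : ZMod N) (s t : ZMod N → ZMod 2) (τ : ZMod N) :
    binCorr N (fun i => s (i + c)) (fun i => t (i + c)) τ = binCorr N s t τ := by
  rcases N.eq_zero_or_pos with rfl | hN
  · simp [binCorr]
  have : NeZero N := ⟨hN.ne'⟩
  rw [binCorr, binCorr, sum_range_natCast_zmod N fun x => (-1 : ℤ) ^ (s x + t (x + τ)).val,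
    sum_range_natCast_zmod N fun x => (-1 : ℤ) ^ (s (x + c) + t (x + τ + c)).val]
  simp only [add_right_comm _ τ c]
  exact Equiv.sum_comp (Equiv.addRight c) fun x => (-1 : ℤ) ^ (s x + t (x + τ)).val

lemma sum_range_two_mul {M : Type*} [AddCommMonoid M] (n : ℕ) (f : ℕ → M) :
    ∑ i ∈ range (2 * n), f i = ∑ k ∈ range n, (f (2 * k) + f (2 * k + 1)) := by
  induction n with
  | zero => simp
  | succ m ih => rw [Nat.mul_succ, sum_range_succ, sum_range_succ, ih, sum_range_succ, add_assoc]

lemma interleaveSeq_natCast {H : ℕ} (n : ℕ) (a b : ZMod n → ZMod H) (m : ℕ) :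
    interleaveSeq n a b m = if m % 2 = 0 then a ↑(m / 2) else b ↑(m / 2) := by
  simp only [interleaveSeq, ZMod.val_natCast, Nat.mod_mul_right_mod, Nat.mod_mul_right_div_self,
    ZMod.natCast_mod]

lemma binCorr_interleaveSeq (n : ℕ) (a b a' b' : ZMod n → ZMod 2) (τ : ℕ) :
    binCorr (2 * n) (interleaveSeq n a b) (interleaveSeq n a' b') ((2 * τ : ℕ) : ZMod (2 * n)) =
      binCorr n a a' τ + binCorr n b b' τ := by
  rw [binCorr, sum_range_two_mul, binCorr, binCorr, ← sum_add_distrib]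
  refine sum_congr rfl fun k _ => ?_
  simp only [← Nat.cast_add, interleaveSeq_natCast]
  have h1 : (2 * k + 1) / 2 = k := by omega
  have h2 : (2 * k + 1 + 2 * τ) / 2 = k + τ := by omega
  simp [Nat.add_mod, h1, h2, ← Nat.mul_add]

theorem stmt4_general (n : ℕ) (a0 a1 a2 a3 : ZMod n → ZMod 2) (e0 e1 e2 : ZMod 2)
    (u : ZMod (2 * n) → ZMod 4) (hu : u = constructionI n a0 a1 a2 a3 e0 e1 e2)
    (τ0 : ℕ) :
    quadCorr (2 * n) u u ((2 * τ0 : ℕ) : ZMod (2 * n)) =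
      ((binCorr n a0 a0 (τ0 : ZMod n) + binCorr n a1 a1 (τ0 : ZMod n) +
          binCorr n a2 a2 (τ0 : ZMod n) + binCorr n a3 a3 (τ0 : ZMod n) : ℤ) : ℂ) / 2 +
        (-1 : ℂ) ^ e1.val *
          (((binCorr n a0 a2 (τ0 : ZMod n) - binCorr n a2 a0 (τ0 : ZMod n) : ℤ) : ℂ) +
            (-1 : ℂ) ^ (e0 + e1 + e2).val *
              ((binCorr n a1 a3 (τ0 : ZMod n) - binCorr n a3 a1 (τ0 : ZMod n) : ℤ) : ℂ)) *
          Complex.I / 2 := by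
  subst hu
  simp only [constructionI, quadCorr_grayInv, binCorr_interleaveSeq, binCorr_const_add_left,
    binCorr_const_add_right, binCorr_comp_add_right, neg_one_pow_val_add]
  push_cast
  rcases neg_one_pow_eq_or ℂ e0.val with h0 | h0 <;> rcases neg_one_pow_eq_or ℂ e1.val with h1 | h1 <;>
    rcases neg_one_pow_eq_or ℂ e2.val with h2 | h2 <;> simp only [h0, h1, h2] <;> ring

theorem stmt4 (n : ℕ) (hn : Odd n) (a0 a1 a2 a3 : ZMod n → ZMod 2) (e0 e1 e2 : ZMod 2)
    (u : ZMod (2 * n) → ZMod 4) (hu : u = constructionI n a0 a1 a2 a3 e0 e1 e2)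
    (τ0 : ℕ) (hτ0 : τ0 < n) :
    quadCorr (2 * n) u u ((2 * τ0 : ℕ) : ZMod (2 * n)) =
      ((binCorr n a0 a0 (τ0 : ZMod n) + binCorr n a1 a1 (τ0 : ZMod n) +
          binCorr n a2 a2 (τ0 : ZMod n) + binCorr n a3 a3 (τ0 : ZMod n) : ℤ) : ℂ) / 2 +
        (-1 : ℂ) ^ e1.val *
          (((binCorr n a0 a2 (τ0 : ZMod n) - binCorr n a2 a0 (τ0 : ZMod n) : ℤ) : ℂ) +
            (-1 : ℂ) ^ (e0 + e1 + e2).val *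
              ((binCorr n a1 a3 (τ0 : ZMod n) - binCorr n a3 a1 (τ0 : ZMod n) : ℤ) : ℂ)) *
          Complex.I / 2 :=
  stmt4_general n a0 a1 a2 a3 e0 e1 e2 u hu τ0
end

section
/- Let n = 4f+1 be an odd prime, let D_0, D_1, D_2, D_3 be the cyclotomic classes of order 4 with respect to a generator α of (Z/nZ)^*, and let s_1,…,s_6 be the six binary sequences of length n with support sets D_0∪D_1, D_0∪D_2, D_0∪D_3, D_1∪D_2, D_1∪D_3, D_2∪D_3. Then for all 1 ≤ i, j ≤ 6, every k ∈ {0,1,2,3}, every τ ∈ D_k, and every l ∈ D_{k+2 mod 4}: if f is odd then R_{s_i,s_j}(τ) = R_{s_j,s_i}(l), and if f is even then R_{s_i,s_j}(τ) = R_{s_j,s_i}(τ). -/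
/-- The cyclotomic class `D_i` of order 4 w.r.t. the generator `α`. -/
def cycClass (n f : ℕ) (α : ZMod n) (i : ℕ) : Set (ZMod n) :=
  {x | ∃ t < f, x = α ^ (4 * t + i)}

/-- The cyclotomic number `(i, j)` of order 4: `|(D_i + 1) ∩ D_j|`. -/
noncomputable def cycNum (n f : ℕ) (α : ZMod n) (i j : ℕ) : ℕ :=
  Set.ncard {x : ZMod n | x - 1 ∈ cycClass n f α i ∧ x ∈ cycClass n f α j}

open Classical in
/-- The binary sequence of length `n` with support set `D_i ∪ D_j`. -/
noncomputable def cycSeq (n f : ℕ) (α : ZMod n) (i j : ℕ) : ZMod n → ZMod 2 :=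
  fun x => if x ∈ cycClass n f α i ∪ cycClass n f α j then 1 else 0

/-- Six binary sequences with supports `D₀∪D₁, D₀∪D₂, D₀∪D₃, D₁∪D₂, D₁∪D₃, D₂∪D₃`. -/
noncomputable def sixSeq (n f : ℕ) (α : ZMod n) : Fin 6 → ZMod n → ZMod 2
  | 0 => cycSeq n f α 0 1
  | 1 => cycSeq n f α 0 2
  | 2 => cycSeq n f α 0 3
  | 3 => cycSeq n f α 1 2
  | 4 => cycSeq n f α 1 3
  | 5 => cycSeq n f α 2 3

/-- 16 times the cyclotomic numbers of order 4 in the `f` odd case. -/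
def oddTable16 (n x y : ℤ) (i j : ℕ) : ℤ :=
  match i, j with
  | 0, 0 => n - 7 + 2*x
  | 0, 1 => n + 1 + 2*x - 8*y
  | 0, 2 => n + 1 - 6*x
  | 0, 3 => n + 1 + 2*x + 8*y
  | 1, 0 => n - 3 - 2*x
  | 1, 1 => n - 3 - 2*x
  | 1, 2 => n + 1 + 2*x + 8*y
  | 1, 3 => n + 1 + 2*x - 8*y
  | 2, 0 => n - 7 + 2*x
  | 2, 1 => n - 3 - 2*x
  | 2, 2 => n - 7 + 2*x
  | 2, 3 => n - 3 - 2*x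
  | 3, 0 => n - 3 - 2*x
  | 3, 1 => n + 1 + 2*x + 8*y
  | 3, 2 => n + 1 + 2*x - 8*y
  | 3, 3 => n - 3 - 2*x
  | _, _ => 0

/-- 16 times the cyclotomic numbers of order 4 in the `f` even case. -/
def evenTable16 (n x y : ℤ) (i j : ℕ) : ℤ :=
  match i, j with
  | 0, 0 => n - 11 - 6*x
  | 0, 1 => n - 3 + 2*x + 8*y
  | 0, 2 => n - 3 + 2*x
  | 0, 3 => n - 3 + 2*x - 8*y
  | 1, 0 => n - 3 + 2*x + 8*y
  | 1, 1 => n - 3 + 2*x - 8*y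
  | 1, 2 => n + 1 - 2*x
  | 1, 3 => n + 1 - 2*x
  | 2, 0 => n - 3 + 2*x
  | 2, 1 => n + 1 - 2*x
  | 2, 2 => n - 3 + 2*x
  | 2, 3 => n + 1 - 2*x
  | 3, 0 => n - 3 + 2*x - 8*y
  | 3, 1 => n + 1 - 2*x
  | 3, 2 => n + 1 - 2*x
  | 3, 3 => n - 3 + 2*x + 8*y
  | _, _ => 0

/-!
Swapping the two sequences negates the shift, `R_{s,t}(τ) = R_{t,s}(-τ)`. All six sequences
are invariant under multiplication by `α⁴`, hence so are their correlations, which therefore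
depend on the shift `α^e` only through `e mod 4`. Finally `-1 = α^(2f)` because a generator is
a non-square, so negating the shift adds `2f` to the exponent: this moves `D_k` to `D_{k+2}`
when `f` is odd and keeps `D_k` when `f` is even.
-/

open Finset

theorem ZMod.sum_range_natCast {M : Type*} [AddCommMonoid M] {N : ℕ} [NeZero N]
    (g : ZMod N → M) : ∑ i ∈ range N, g i = ∑ x : ZMod N, g x :=
  sum_nbij' (fun i => (i : ZMod N)) ZMod.val (fun _ _ => mem_univ _)
    (fun x _ => mem_range.2 x.val_lt) (fun _ hi => ZMod.val_cast_of_lt (mem_range.1 hi))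
    (fun x _ => ZMod.natCast_zmod_val x) (fun _ _ => rfl)

section BinCorr

variable {N : ℕ} [NeZero N] (s t : ZMod N → ZMod 2)

theorem binCorr_eq_sum (τ : ZMod N) :
    binCorr N s t τ = ∑ x : ZMod N, (-1 : ℤ) ^ (s x + t (x + τ)).val :=
  ZMod.sum_range_natCast fun x => (-1 : ℤ) ^ (s x + t (x + τ)).val

theorem binCorr_comm (τ : ZMod N) : binCorr N s t τ = binCorr N t s (-τ) := by
  rw [binCorr_eq_sum, binCorr_eq_sum]
  refine Fintype.sum_equiv (Equiv.addRight τ) _ _ fun x => ?_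
  rw [Equiv.coe_addRight, add_neg_cancel_right, add_comm (s x)]

variable {s t}

theorem binCorr_mul_of_invariant {γ : ZMod N} (hγ : IsUnit γ) (hs : ∀ x, s (γ * x) = s x)
    (ht : ∀ x, t (γ * x) = t x) (τ : ZMod N) : binCorr N s t (γ * τ) = binCorr N s t τ := by
  rw [binCorr_eq_sum, binCorr_eq_sum]
  refine (Fintype.sum_bijective (γ * ·) hγ.isRegular.left.bijective_of_finite _ _
    fun x => ?_).symm
  rw [hs, ← mul_add, ht]

end BinCorr

theorem FiniteField.not_isSquare_of_forall_eq_pow {F : Type*} [Field F] [Finite F]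
    (hF : ringChar F ≠ 2) {α : F} (hα : ∀ z : F, z ≠ 0 → ∃ k : ℕ, z = α ^ k) :
    ¬IsSquare α := by
  obtain ⟨a, ha⟩ := FiniteField.exists_nonsquare hF
  rintro ⟨β, rfl⟩
  obtain ⟨k, rfl⟩ := hα a fun h => ha (h ▸ IsSquare.zero)
  exact ha ⟨β ^ k, mul_pow β β k⟩

theorem FiniteField.pow_card_div_two_eq_neg_one_of_forall_eq_pow {F : Type*} [Field F]
    [Fintype F] (hF : ringChar F ≠ 2) {α : F} (hα : ∀ z : F, z ≠ 0 → ∃ k : ℕ, z = α ^ k) :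
    α ^ (Fintype.card F / 2) = -1 := by
  have hsq := FiniteField.not_isSquare_of_forall_eq_pow hF hα
  have hα0 : α ≠ 0 := fun h => hsq (h ▸ IsSquare.zero)
  exact (FiniteField.pow_dichotomy hF hα0).resolve_left
    fun h => hsq ((FiniteField.isSquare_iff hF hα0).2 h)

section CycClass

variable {n f : ℕ} {α : ZMod n}

theorem mem_cycClass_iff (hα : α ^ (4 * f) = 1) (hf : 0 < f) {k : ℕ} {x : ZMod n} :
    x ∈ cycClass n f α k ↔ ∃ t : ℕ, x = α ^ (4 * t + k) := by
  refine ⟨fun ⟨t, _, h⟩ => ⟨t, h⟩, fun ⟨t, h⟩ => ⟨t % f, Nat.mod_lt t hf, ?_⟩⟩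
  rw [h, pow_add, pow_add, pow_mul, pow_mul, ← pow_eq_pow_mod t (by rwa [← pow_mul])]

theorem pow_four_mul_mem_cycClass_iff (hα : α ^ (4 * f) = 1) (hf : 0 < f) {k : ℕ}
    {x : ZMod n} :
    α ^ 4 * x ∈ cycClass n f α k ↔ x ∈ cycClass n f α k := by
  simp only [mem_cycClass_iff hα hf]
  constructor
  · rintro ⟨t, ht⟩
    refine ⟨t + (f - 1), ?_⟩
    have hsplit : α ^ (4 * f) = α ^ (4 * (f - 1)) * α ^ 4 := by
      rw [← pow_add]; congr 1; omega
    calc x = α ^ (4 * f) * x := by rw [hα, one_mul]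
      _ = α ^ (4 * (f - 1)) * (α ^ 4 * x) := by rw [hsplit, mul_assoc]
      _ = α ^ (4 * (t + (f - 1)) + k) := by rw [ht]; ring
  · rintro ⟨t, rfl⟩
    exact ⟨t + 1, by ring⟩

theorem cycSeq_pow_four_mul (hα : α ^ (4 * f) = 1) (hf : 0 < f) (a b : ℕ) (x : ZMod n) :
    cycSeq n f α a b (α ^ 4 * x) = cycSeq n f α a b x := by
  have hmem : α ^ 4 * x ∈ cycClass n f α a ∪ cycClass n f α b ↔
      x ∈ cycClass n f α a ∪ cycClass n f α b := by
    simp only [Set.mem_union, pow_four_mul_mem_cycClass_iff hα hf]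
  classical exact if_congr hmem rfl rfl

theorem sixSeq_pow_four_mul (hα : α ^ (4 * f) = 1) (hf : 0 < f) (i : Fin 6) (x : ZMod n) :
    sixSeq n f α i (α ^ 4 * x) = sixSeq n f α i x := by
  fin_cases i <;> exact cycSeq_pow_four_mul hα hf _ _ x

theorem binCorr_sixSeq_pow_eq_of_mod_eq [NeZero n] (hα : α ^ (4 * f) = 1) (hf : 0 < f)
    (i j : Fin 6) {a b : ℕ} (hab : a % 4 = b % 4) :
    binCorr n (sixSeq n f α i) (sixSeq n f α j) (α ^ a) =
      binCorr n (sixSeq n f α i) (sixSeq n f α j) (α ^ b) := by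
  have hper : Function.Periodic
      (fun e : ℕ => binCorr n (sixSeq n f α i) (sixSeq n f α j) (α ^ e)) 4 := fun e => by
    simp only [pow_add, mul_comm _ (α ^ 4)]
    exact binCorr_mul_of_invariant ((IsUnit.of_pow_eq_one hα (by omega)).pow 4)
      (sixSeq_pow_four_mul hα hf i) (sixSeq_pow_four_mul hα hf j) _
  rw [← hper.map_mod_nat a, hab, hper.map_mod_nat]

end CycClass

theorem stmt16 (n f : ℕ) (hp : n.Prime) (hnf : n = 4 * f + 1)
    (α : ZMod n) (hα : ∀ z : ZMod n, z ≠ 0 → ∃ k : ℕ, z = α ^ k) :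
    ∀ i j : Fin 6, ∀ k < 4, ∀ τ ∈ cycClass n f α k, ∀ l ∈ cycClass n f α ((k + 2) % 4),
      (Odd f →
        binCorr n (sixSeq n f α i) (sixSeq n f α j) τ =
          binCorr n (sixSeq n f α j) (sixSeq n f α i) l) ∧
      (Even f →
        binCorr n (sixSeq n f α i) (sixSeq n f α j) τ =
          binCorr n (sixSeq n f α j) (sixSeq n f α i) τ) := by
  have : Fact n.Prime := ⟨hp⟩
  have hf : 0 < f := by have := hp.two_le; omega
  have hneg : α ^ (2 * f) = -1 := by
    have := FiniteField.pow_card_div_two_eq_neg_one_of_forall_eq_pow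
      (by rw [ZMod.ringChar_zmod_n]; omega) hα
    rwa [ZMod.card, show n / 2 = 2 * f by omega] at this
  have hα4 : α ^ (4 * f) = 1 := by rw [show 4 * f = 2 * f * 2 by ring, pow_mul, hneg]; norm_num
  have hneg_pow (e : ℕ) : -α ^ e = α ^ (2 * f + e) := by rw [pow_add, hneg, neg_one_mul]
  intro i j k _ τ ⟨t, _, hτ⟩ l ⟨u, _, hl⟩
  subst hτ hl
  refine ⟨fun ⟨g, hg⟩ => ?_, fun ⟨g, hg⟩ => ?_⟩ <;>
    rw [binCorr_comm (sixSeq n f α j), hneg_pow] <;>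
    exact binCorr_sixSeq_pow_eq_of_mod_eq hα4 hf i j (by omega)
end
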